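/- Let G be a finite simple graph, S, T ⊆ V(G) two vertex sets, and k a nonnegative integer. Then the number of important S–T separators of size at most k is at most 4^k. -/

import Mathlib

open SimpleGraph

variable {V : Type*}

/-- The open neighbourhood `N_G(C)` of a vertex set `C`:
vertices outside `C` with a neighbour in `C`. -/
def setNbhd (G : SimpleGraph V) (C : Set V) : Set V :=
  {v | v ∉ C ∧ ∃ u ∈ C, G.Adj u v}

/-- The closed neighbourhood `N_G[C] = C ∪ N_G(C)`. -/
def closedNbhd (G : SimpleGraph V) (C : Set V) : Set V :=
  C ∪ setNbhd G C

/-- `W` is `(q,k)`-unbreakable in the induced subgraph `G[U]`: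
every separation `(A,B)` of `G[U]` of order at most `k` has
`|(A∖B) ∩ W| ≤ q` or `|(B∖A) ∩ W| ≤ q`. -/
def UnbreakableIn (G : SimpleGraph V) (U W : Set V) (q k : ℕ) : Prop :=
  ∀ A B : Set V, A ∪ B = U →
    (∀ a ∈ A \ B, ∀ b ∈ B \ A, ¬ G.Adj a b) →
    (A ∩ B).ncard ≤ k →
    ((A \ B) ∩ W).ncard ≤ q ∨ ((B \ A) ∩ W).ncard ≤ q

/-- `W` is `(q,k)`-unbreakable in `G`. -/
def Unbreakable (G : SimpleGraph V) (W : Set V) (q k : ℕ) : Prop :=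
  UnbreakableIn G Set.univ W q k

/-- `x` and `y` lie in the same connected component of `G − W`. -/
def ReachAvoid (G : SimpleGraph V) (W : Set V) (x y : V) : Prop :=
  ∃ (hx : x ∈ Wᶜ) (hy : y ∈ Wᶜ), (G.induce Wᶜ).Reachable ⟨x, hx⟩ ⟨y, hy⟩

/-- `W` is an `X–Y` separator: no connected component of `G − W` contains
a vertex of `X∖W` and a vertex of `Y∖W`. -/
def IsSeparator (G : SimpleGraph V) (X Y W : Set V) : Prop :=
  ∀ x ∈ X \ W, ∀ y ∈ Y \ W, ¬ ReachAvoid G W x y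

/-- `R_{G−W}(X∖W)`: the set of vertices reachable from `X∖W` in `G − W`. -/
def reachSet (G : SimpleGraph V) (W X : Set V) : Set V :=
  {y | ∃ x ∈ X \ W, ReachAvoid G W x y}

/-- `W` is an important `X–Y` separator. -/
def IsImportantSeparator (G : SimpleGraph V) (X Y W : Set V) : Prop :=
  IsSeparator G X Y W ∧
  (∀ W' ⊆ W, IsSeparator G X Y W' → W' = W) ∧
  ∀ W' : Set V, IsSeparator G X Y W' → W'.ncard ≤ W.ncard →
    ¬ reachSet G W X ⊂ reachSet G W' X

/-- A chip (w.r.t. `G`, `k` and `S`): `G[C]` is connected, `|N_G(C)| ≤ 3k`,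
and `N_G(C)` is an important `C–S` separator. -/
def IsChip (G : SimpleGraph V) (k : ℕ) (S C : Set V) : Prop :=
  (G.induce C).Connected ∧ (setNbhd G C).ncard ≤ 3 * k ∧
  IsImportantSeparator G C S (setNbhd G C)

/-- The family of all inclusion-wise maximal chips. -/
def maximalChips (G : SimpleGraph V) (k : ℕ) (S : Set V) : Set (Set V) :=
  {C | IsChip G k S C ∧ ∀ C', IsChip G k S C' → C ⊆ C' → C' = C}

/-- Two vertex sets touch: they intersect or some edge joins them. -/
def Touches (G : SimpleGraph V) (C₁ C₂ : Set V) : Prop :=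
  (C₁ ∩ C₂).Nonempty ∨ ∃ u ∈ C₁, ∃ v ∈ C₂, G.Adj u v

/-- `D` is a connected component of `G − A`: a maximal set disjoint from `A`
inducing a connected subgraph. -/
def IsCompOf (G : SimpleGraph V) (A D : Set V) : Prop :=
  D ⊆ Aᶜ ∧ (G.induce D).Connected ∧
  ∀ D', D ⊆ D' → D' ⊆ Aᶜ → (G.induce D').Connected → D' = D

/-- The set `A = (⋂_{C ∈ 𝒞} V(G) ∖ N[C]) ∪ ⋃_{C ∈ 𝒞} N(C)` built from the
maximal chips (equals `V(G)` when there are no chips). -/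
def chipBag (G : SimpleGraph V) (k : ℕ) (S : Set V) : Set V :=
  (⋂ C ∈ maximalChips G k S, (closedNbhd G C)ᶜ) ∪
    ⋃ C ∈ maximalChips G k S, setNbhd G C

/-- `η(k) = 3k·(3k·4^{3k}+1)`. -/
def etaB (k : ℕ) : ℕ := 3 * k * (3 * k * 4 ^ (3 * k) + 1)

/-- `τ(k) = (3k)²·8^{3k} + 2k`. -/
def tauB (k : ℕ) : ℕ := (3 * k) ^ 2 * 8 ^ (3 * k) + 2 * k

/-- `τ′(k) = τ + (C(τ+k,2)·k + k)·k·η`. -/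
def tauB' (k : ℕ) : ℕ :=
  tauB k + ((tauB k + k).choose 2 * k + k) * k * etaB k

/-- The tree graph determined by a parent function. -/
def parentGraph {T : Type*} (parent : T → T) : SimpleGraph T where
  Adj t s := t ≠ s ∧ (parent t = s ∨ parent s = t)
  symm := by constructor; intro t s h; exact ⟨h.1.symm, h.2.symm⟩
  loopless := by constructor; intro t h; exact h.1 rfl

/-- The descendants of `t` (including `t` itself). -/
def descSet {T : Type*} (parent : T → T) (t : T) : Set T :=
  {u | ∃ n : ℕ, parent^[n] u = t}

/-- `γ(t) = ⋃_{u ⪯ t} β(u)`. -/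
def gammaSet {T : Type*} (parent : T → T) (β : T → Set V) (t : T) : Set V :=
  ⋃ u ∈ descSet parent t, β u

/-- `σ(t) = ∅` for the root, `β(t) ∩ β(parent t)` otherwise. -/
def sigmaSet {T : Type*} [DecidableEq T] (root : T) (parent : T → T)
    (β : T → Set V) (t : T) : Set V :=
  if t = root then ∅ else β t ∩ β (parent t)

/-- `(T,β)` (a rooted tree given by `root` and `parent`, with bags `β`)
is a tree decomposition of `G`. -/
structure IsTreeDecomp (G : SimpleGraph V) {T : Type*} (root : T) (parent : T → T)
    (β : T → Set V) : Prop where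
  parent_root : parent root = root
  reaches_root : ∀ t : T, ∃ n : ℕ, parent^[n] t = root
  bags_connected : ∀ v : V, ((parentGraph parent).induce {t | v ∈ β t}).Connected
  edge_in_bag : ∀ u v : V, G.Adj u v → ∃ t : T, u ∈ β t ∧ v ∈ β t

/-!
Following Marx, count with the measure `2k - λ`, where `λ` is the minimum size of a separator.
Among the minimum separators there is a furthest one `W₀`, whose reach `R₀` is contained in the
reach of every important separator (uncrossing with the submodular function `A ↦ |N(A)|`).
For a vertex `v ∈ W₀`, an important separator either contains `v`, and loses it to become
important in `G - v` where `k` and `λ` both drop by one, or avoids `v`, and stays important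
when the source grows to `R₀ ∪ {v}`, where `λ` increases. Either way the measure drops, so there are
at most `2 ^ (2k)` important separators. Separators in the statement may meet `S`; attaching a new
vertex adjacent to `S` and using it as the source reduces to separators avoiding the source.
-/

section ReachSet

variable {G : SimpleGraph V} {W W' X X' Y A B : Set V}

lemma diff_subset_reachSet : X \ W ⊆ reachSet G W X :=
  fun x hx => ⟨x, hx, hx.2, hx.2, .refl _⟩

lemma reachSet_closed {u v : V} (hu : u ∈ reachSet G W X) (huv : G.Adj u v) (hv : v ∉ W) :
    v ∈ reachSet G W X := by
  obtain ⟨x, hx, hxW, huW, hxu⟩ := hu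
  exact ⟨x, hx, hxW, hv, hxu.trans (Adj.reachable (G := G.induce Wᶜ) (u := ⟨u, huW⟩)
    (v := ⟨v, hv⟩) huv)⟩

lemma disjoint_reachSet : Disjoint (reachSet G W X) W :=
  Set.disjoint_left.2 fun _ ⟨_, _, _, hy, _⟩ => hy

lemma reachSet_subset_of_closed (hXA : X \ W ⊆ A)
    (hA : ∀ u ∈ A, ∀ v, G.Adj u v → v ∉ W → v ∈ A) : reachSet G W X ⊆ A := by
  rintro y ⟨x, hx, _, _, ⟨p⟩⟩
  suffices ∀ a b : ↥Wᶜ, (G.induce Wᶜ).Walk a b → a.1 ∈ A → b.1 ∈ A from this _ _ p (hXA hx)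
  intro a b p
  induction p with
  | nil => exact id
  | @cons _ b _ h _ ih => exact fun ha => ih (hA _ ha _ h b.2)

theorem reachSet_induction {P : V → Prop} (base : ∀ x ∈ X \ W, P x)
    (step : ∀ u ∈ reachSet G W X, P u → ∀ v, G.Adj u v → v ∉ W → P v) :
    ∀ y ∈ reachSet G W X, P y := fun _ hy =>
  (reachSet_subset_of_closed (A := {y | y ∈ reachSet G W X ∧ P y})
    (fun x hx => ⟨diff_subset_reachSet hx, base x hx⟩)
    (fun u hu v huv hv => ⟨reachSet_closed hu.1 huv hv, step u hu.1 hu.2 v huv hv⟩) hy).2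

lemma reachSet_mono (h : X ⊆ X') : reachSet G W X ⊆ reachSet G W X' :=
  fun _ ⟨x, hx, hr⟩ => ⟨x, ⟨h hx.1, hx.2⟩, hr⟩

lemma reachSet_subset_reachSet_of_disjoint (hB : reachSet G W X ⊆ B) (hBW' : Disjoint B W') :
    reachSet G W X ⊆ reachSet G W' X :=
  reachSet_induction
    (fun _ hx => diff_subset_reachSet
      ⟨hx.1, hBW'.notMem_of_mem_left (hB (diff_subset_reachSet hx))⟩)
    (fun _ hu hu' _ huv hv => reachSet_closed hu' huv
      (hBW'.notMem_of_mem_left (hB (reachSet_closed hu huv hv))))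

lemma reachSet_eq_of_subset (hXX' : X ⊆ X') (hX' : X' ⊆ reachSet G W X) :
    reachSet G W X' = reachSet G W X :=
  (reachSet_subset_of_closed (fun _ hx => hX' hx.1)
    fun _ hu _ huv hv => reachSet_closed hu huv hv).antisymm (reachSet_mono hXX')

lemma isSeparator_iff_disjoint_reachSet :
    IsSeparator G X Y W ↔ Disjoint (reachSet G W X) Y := by
  rw [Set.disjoint_left]
  constructor
  · rintro h y ⟨x, hx, hr⟩ hy
    exact h x hx y ⟨hy, hr.2.1⟩ hr
  · rintro h x hx y hy hr
    exact h ⟨x, hx, hr⟩ hy.1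

end ReachSet

section Neighbourhood

variable {G : SimpleGraph V} {W X B : Set V}

lemma disjoint_setNbhd : Disjoint B (setNbhd G B) :=
  Set.disjoint_left.2 fun _ hv hN => hN.1 hv

lemma setNbhd_reachSet_subset : setNbhd G (reachSet G W X) ⊆ W := fun _ ⟨hv, _, hu, huv⟩ =>
  by_contra fun hvW => hv (reachSet_closed hu huv hvW)

lemma reachSet_setNbhd_subset (hXB : X ⊆ B) : reachSet G (setNbhd G B) X ⊆ B :=
  reachSet_subset_of_closed (fun _ hx => hXB hx.1) fun _ hu _ huv hv =>
    by_contra fun hvB => hv ⟨hvB, _, hu, huv⟩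

lemma reachSet_subset_reachSet_setNbhd (h : reachSet G W X ⊆ B) :
    reachSet G W X ⊆ reachSet G (setNbhd G B) X :=
  reachSet_subset_reachSet_of_disjoint h disjoint_setNbhd

lemma ncard_setNbhd_union_add_ncard_setNbhd_inter_le [Finite V] (A B : Set V) :
    (setNbhd G (A ∪ B)).ncard + (setNbhd G (A ∩ B)).ncard ≤
      (setNbhd G A).ncard + (setNbhd G B).ncard := by
  have h_union : setNbhd G (A ∪ B) ∪ setNbhd G (A ∩ B) ⊆ setNbhd G A ∪ setNbhd G B := by
    rintro v (⟨hv, u, hu | hu, huv⟩ | ⟨hv, u, hu, huv⟩)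
    · exact Or.inl ⟨fun hA => hv (Or.inl hA), u, hu, huv⟩
    · exact Or.inr ⟨fun hB => hv (Or.inr hB), u, hu, huv⟩
    · by_cases hA : v ∈ A
      · exact Or.inr ⟨fun hB => hv ⟨hA, hB⟩, u, hu.2, huv⟩
      · exact Or.inl ⟨hA, u, hu.1, huv⟩
  have h_inter : setNbhd G (A ∪ B) ∩ setNbhd G (A ∩ B) ⊆ setNbhd G A ∩ setNbhd G B :=
    fun v ⟨⟨hv, _⟩, _, u, hu, huv⟩ =>
      ⟨⟨fun hA => hv (Or.inl hA), u, hu.1, huv⟩, ⟨fun hB => hv (Or.inr hB), u, hu.2, huv⟩⟩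
  rw [← Set.ncard_union_add_ncard_inter, ← Set.ncard_union_add_ncard_inter (setNbhd G A)]
  exact add_le_add (Set.ncard_le_ncard h_union) (Set.ncard_le_ncard h_inter)

end Neighbourhood

def IsDisjointSeparator (G : SimpleGraph V) (X Y W : Set V) : Prop :=
  Disjoint W X ∧ Disjoint (reachSet G W X) Y

def IsImportantDisjointSeparator (G : SimpleGraph V) (X Y W : Set V) : Prop :=
  IsDisjointSeparator G X Y W ∧
  (∀ W' ⊆ W, IsDisjointSeparator G X Y W' → W' = W) ∧
  ∀ W', IsDisjointSeparator G X Y W' → W'.ncard ≤ W.ncard →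
    ¬ reachSet G W X ⊂ reachSet G W' X

section DisjointSeparator

variable {G : SimpleGraph V} {W U X X' Y B : Set V}

lemma IsDisjointSeparator.subset_reachSet (h : IsDisjointSeparator G X Y W) :
    X ⊆ reachSet G W X :=
  fun _ hx => diff_subset_reachSet ⟨hx, h.1.notMem_of_mem_right hx⟩

lemma IsDisjointSeparator.mono_source (h : IsDisjointSeparator G X' Y W) (hXX' : X ⊆ X') :
    IsDisjointSeparator G X Y W :=
  ⟨h.1.mono_right hXX', h.2.mono_left (reachSet_mono hXX')⟩

lemma isDisjointSeparator_setNbhd (hXB : X ⊆ B) (hBY : Disjoint B Y) :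
    IsDisjointSeparator G X Y (setNbhd G B) :=
  ⟨disjoint_setNbhd.symm.mono_right hXB, hBY.mono_left (reachSet_setNbhd_subset hXB)⟩

lemma IsDisjointSeparator.setNbhd_reachSet (h : IsDisjointSeparator G X Y W) :
    IsDisjointSeparator G X Y (setNbhd G (reachSet G W X)) :=
  isDisjointSeparator_setNbhd h.subset_reachSet h.2

lemma IsDisjointSeparator.setNbhd_union (hW : IsDisjointSeparator G X Y W)
    (hU : IsDisjointSeparator G X Y U) :
    IsDisjointSeparator G X Y (setNbhd G (reachSet G W X ∪ reachSet G U X)) :=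
  isDisjointSeparator_setNbhd (hW.subset_reachSet.trans Set.subset_union_left)
    (Set.disjoint_union_left.2 ⟨hW.2, hU.2⟩)

lemma IsDisjointSeparator.setNbhd_inter (hW : IsDisjointSeparator G X Y W)
    (hU : IsDisjointSeparator G X Y U) :
    IsDisjointSeparator G X Y (setNbhd G (reachSet G W X ∩ reachSet G U X)) :=
  isDisjointSeparator_setNbhd (Set.subset_inter hW.subset_reachSet hU.subset_reachSet)
    (hW.2.mono_left Set.inter_subset_left)

lemma IsDisjointSeparator.reachSet_setNbhd_union (hW : IsDisjointSeparator G X Y W) :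
    reachSet G (setNbhd G (reachSet G W X ∪ reachSet G U X)) X =
      reachSet G W X ∪ reachSet G U X :=
  (reachSet_setNbhd_subset (hW.subset_reachSet.trans Set.subset_union_left)).antisymm <|
    Set.union_subset (reachSet_subset_reachSet_setNbhd Set.subset_union_left)
      (reachSet_subset_reachSet_setNbhd Set.subset_union_right)

lemma ncard_setNbhd_reachSet_union_add_inter_le [Finite V] :
    (setNbhd G (reachSet G W X ∪ reachSet G U X)).ncard +
      (setNbhd G (reachSet G W X ∩ reachSet G U X)).ncard ≤ W.ncard + U.ncard :=
  (ncard_setNbhd_union_add_ncard_setNbhd_inter_le _ _).trans <|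
    add_le_add (Set.ncard_le_ncard setNbhd_reachSet_subset)
      (Set.ncard_le_ncard setNbhd_reachSet_subset)

end DisjointSeparator

structure IsFurthestMinSeparator (G : SimpleGraph V) (X Y W : Set V) : Prop where
  isDisjointSeparator : IsDisjointSeparator G X Y W
  ncard_le : ∀ U, IsDisjointSeparator G X Y U → W.ncard ≤ U.ncard
  reachSet_subset : ∀ U, IsDisjointSeparator G X Y U → U.ncard ≤ W.ncard →
    reachSet G U X ⊆ reachSet G W X

section FurthestMinSeparator

variable [Finite V] {G : SimpleGraph V} {X Y W W₀ U : Set V}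

theorem exists_isFurthestMinSeparator (h : ∃ U, IsDisjointSeparator G X Y U) :
    ∃ W, IsFurthestMinSeparator G X Y W := by
  obtain ⟨W₁, hW₁, hW₁_min⟩ := Set.exists_min_image {U | IsDisjointSeparator G X Y U} Set.ncard
    (Set.toFinite _) h
  obtain ⟨W, ⟨hW, hW_card⟩, hW_max⟩ := Set.exists_max_image
    {U | IsDisjointSeparator G X Y U ∧ U.ncard = W₁.ncard} (fun U => (reachSet G U X).ncard)
    (Set.toFinite _) ⟨W₁, hW₁, rfl⟩
  have h_min : ∀ U, IsDisjointSeparator G X Y U → W.ncard ≤ U.ncard :=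
    fun U hU => hW_card ▸ hW₁_min U hU
  refine ⟨W, hW, h_min, fun U hU hUW => ?_⟩
  have h_union := h_min _ (hW.setNbhd_union hU)
  have h_inter := h_min _ (hW.setNbhd_inter hU)
  have h_sub := ncard_setNbhd_reachSet_union_add_inter_le (G := G) (X := X) (W := W) (U := U)
  have h_reach := hW_max _ ⟨hW.setNbhd_union hU, by omega⟩
  rw [hW.reachSet_setNbhd_union] at h_reach
  rw [Set.eq_of_subset_of_ncard_le Set.subset_union_left h_reach]
  exact Set.subset_union_right

namespace IsFurthestMinSeparator

lemma setNbhd_reachSet_eq (hW₀ : IsFurthestMinSeparator G X Y W₀) :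
    setNbhd G (reachSet G W₀ X) = W₀ :=
  Set.eq_of_subset_of_ncard_le setNbhd_reachSet_subset
    (hW₀.ncard_le _ hW₀.isDisjointSeparator.setNbhd_reachSet)

/-- Uncrossing `W` with `W₀` gives a separator no larger than `W` whose reach is the union. -/
lemma reachSet_subset_of_important (hW₀ : IsFurthestMinSeparator G X Y W₀)
    (hW : IsImportantDisjointSeparator G X Y W) :
    reachSet G W₀ X ⊆ reachSet G W X := by
  by_contra h_not
  have h_sep := hW₀.isDisjointSeparator
  have h_inter := hW₀.ncard_le _ (h_sep.setNbhd_inter hW.1)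
  have h_sub := ncard_setNbhd_reachSet_union_add_inter_le (G := G) (X := X) (W := W₀) (U := W)
  refine hW.2.2 _ (h_sep.setNbhd_union hW.1) (by omega) ?_
  rw [h_sep.reachSet_setNbhd_union]
  exact Set.ssubset_iff_subset_ne.2 ⟨Set.subset_union_right,
    fun h_eq => h_not (h_eq ▸ Set.subset_union_left)⟩

lemma ncard_lt (hW₀ : IsFurthestMinSeparator G X Y W₀) {v : V} (hv : v ∈ W₀)
    (hU : IsDisjointSeparator G (insert v (reachSet G W₀ X)) Y U) : W₀.ncard < U.ncard := by
  -- Otherwise the boundary of the reach of `U` would be a separator for `X` no larger than `W₀`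
  -- reaching beyond `R₀` to `v`.
  by_contra! h_le
  set B := reachSet G U (insert v (reachSet G W₀ X))
  have hR₀B : reachSet G W₀ X ⊆ B :=
    (Set.subset_insert _ _).trans hU.subset_reachSet
  have hXB : X ⊆ B := hW₀.isDisjointSeparator.subset_reachSet.trans hR₀B
  have h_sepB : IsDisjointSeparator G X Y (setNbhd G B) := isDisjointSeparator_setNbhd hXB hU.2
  have h_farther := hW₀.reachSet_subset _ h_sepB
    ((Set.ncard_le_ncard setNbhd_reachSet_subset).trans h_le)
  obtain ⟨-, u, hu, huv⟩ := hW₀.setNbhd_reachSet_eq.symm ▸ hv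
  have hvB : v ∈ B := hU.subset_reachSet (Set.mem_insert _ _)
  have hv_reach := reachSet_closed (reachSet_subset_reachSet_setNbhd hR₀B hu) huv
    (disjoint_setNbhd.notMem_of_mem_left hvB)
  exact disjoint_reachSet.notMem_of_mem_left (h_farther hv_reach) hv

end IsFurthestMinSeparator

end FurthestMinSeparator

section Branching

variable {G : SimpleGraph V} {X X' Y W U : Set V} {v : V}

lemma reachSet_deleteIncidenceSet (hvX : v ∉ X) :
    reachSet (G.deleteIncidenceSet v) U X = reachSet G (insert v U) X := by
  refine (reachSet_subset_of_closed ?_ ?_).antisymm (reachSet_induction ?_ ?_)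
  · rintro x ⟨hx, hxU⟩
    exact diff_subset_reachSet ⟨hx, by rintro (rfl | h); exacts [hvX hx, hxU h]⟩
  · intro u hu w huw hwU
    rw [deleteIncidenceSet_adj] at huw
    exact reachSet_closed hu huw.1 (by rintro (rfl | h); exacts [huw.2.2 rfl, hwU h])
  · exact fun x hx => diff_subset_reachSet ⟨hx.1, fun h => hx.2 (Or.inr h)⟩
  · intro u hu hu' w huw hw
    have hu_ne : u ≠ v := fun h => disjoint_reachSet.notMem_of_mem_left hu (Or.inl h)
    exact reachSet_closed hu' (deleteIncidenceSet_adj.2 ⟨huw, hu_ne, fun h => hw (Or.inl h)⟩)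
      (fun h => hw (Or.inr h))

lemma isDisjointSeparator_deleteIncidenceSet_iff (hvX : v ∉ X) :
    IsDisjointSeparator (G.deleteIncidenceSet v) X Y U ↔
      IsDisjointSeparator G X Y (insert v U) := by
  rw [IsDisjointSeparator, IsDisjointSeparator, reachSet_deleteIncidenceSet hvX,
    Set.disjoint_insert_left, and_iff_right hvX]

lemma IsImportantDisjointSeparator.deleteIncidenceSet [Finite V]
    (hW : IsImportantDisjointSeparator G X Y W) (hvX : v ∉ X) (hvW : v ∈ W) :
    IsImportantDisjointSeparator (G.deleteIncidenceSet v) X Y (W \ {v}) := by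
  have h_insert : insert v (W \ {v}) = W := by simp [hvW]
  refine ⟨(isDisjointSeparator_deleteIncidenceSet_iff hvX).2 (by rw [h_insert]; exact hW.1),
    fun U hUW hU => ?_, fun U hU hU_card h_ss => ?_⟩ <;>
    rw [isDisjointSeparator_deleteIncidenceSet_iff hvX] at hU
  · rw [← hW.2.1 _ (Set.insert_subset hvW (hUW.trans Set.sdiff_subset)) hU,
      Set.insert_sdiff_self_of_notMem fun h => (hUW h).2 rfl]
  · rw [reachSet_deleteIncidenceSet hvX, reachSet_deleteIncidenceSet hvX, h_insert] at h_ss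
    refine hW.2.2 _ hU ?_ h_ss
    have := Set.ncard_insert_le v U
    have := Set.ncard_sdiff_singleton_of_mem hvW
    have : 0 < W.ncard := (Set.ncard_pos).2 ⟨v, hvW⟩
    omega

lemma IsImportantDisjointSeparator.of_source_subset_reachSet
    (hW : IsImportantDisjointSeparator G X Y W) (hXX' : X ⊆ X') (hX' : X' ⊆ reachSet G W X) :
    IsImportantDisjointSeparator G X' Y W := by
  have h_reach : reachSet G W X' = reachSet G W X := reachSet_eq_of_subset hXX' hX'
  refine ⟨⟨disjoint_reachSet.symm.mono_right hX', h_reach ▸ hW.1.2⟩,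
    fun U hUW hU => hW.2.1 U hUW (hU.mono_source hXX'), fun U hU hU_card h_ss => ?_⟩
  rw [h_reach] at h_ss
  have h_sub : reachSet G W X ⊆ reachSet G U X :=
    reachSet_subset_reachSet_of_disjoint h_ss.1 disjoint_reachSet
  rw [reachSet_eq_of_subset hXX' (hX'.trans h_sub)] at h_ss
  exact hW.2.2 U (hU.mono_source hXX') hU_card h_ss

lemma IsFurthestMinSeparator.ncard_importantDisjointSeparators_le_add [Finite V] {W₀ : Set V}
    (hW₀ : IsFurthestMinSeparator G X Y W₀) (hv : v ∈ W₀) (k : ℕ) :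
    {W | IsImportantDisjointSeparator G X Y W ∧ W.ncard ≤ k}.ncard ≤
      {W | IsImportantDisjointSeparator (G.deleteIncidenceSet v) X Y W ∧ W.ncard ≤ k - 1}.ncard +
      {W | IsImportantDisjointSeparator G (insert v (reachSet G W₀ X)) Y W ∧
        W.ncard ≤ k}.ncard := by
  have hvX : v ∉ X := hW₀.isDisjointSeparator.1.notMem_of_mem_left hv
  set 𝒲 := {W | IsImportantDisjointSeparator G X Y W ∧ W.ncard ≤ k}
  have h_with : {W ∈ 𝒲 | v ∈ W}.ncard ≤
      {W | IsImportantDisjointSeparator (G.deleteIncidenceSet v) X Y W ∧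
        W.ncard ≤ k - 1}.ncard := by
    refine Set.ncard_le_ncard_of_injOn (· \ {v}) (fun W ⟨⟨hW, hWk⟩, hvW⟩ =>
      ⟨hW.deleteIncidenceSet hvX hvW, ?_⟩) ?_
    · rw [Set.ncard_sdiff_singleton_of_mem hvW]
      omega
    · intro W ⟨_, hvW⟩ W' ⟨_, hvW'⟩ h
      simpa [hvW, hvW'] using congr_arg (insert v) h
  have h_without : {W ∈ 𝒲 | v ∉ W} ⊆
      {W | IsImportantDisjointSeparator G (insert v (reachSet G W₀ X)) Y W ∧ W.ncard ≤ k} := by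
    rintro W ⟨⟨hW, hWk⟩, hvW⟩
    obtain ⟨-, u, hu, huv⟩ := hW₀.setNbhd_reachSet_eq.symm ▸ hv
    have hR₀ := hW₀.reachSet_subset_of_important hW
    exact ⟨hW.of_source_subset_reachSet
      (hW₀.isDisjointSeparator.subset_reachSet.trans (Set.subset_insert _ _))
      (Set.insert_subset (reachSet_closed (hR₀ hu) huv hvW) hR₀), hWk⟩
  calc 𝒲.ncard ≤ ({W ∈ 𝒲 | v ∈ W} ∪ {W ∈ 𝒲 | v ∉ W}).ncard :=
        Set.ncard_le_ncard fun W hW => (em (v ∈ W)).imp (⟨hW, ·⟩) (⟨hW, ·⟩)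
    _ ≤ {W ∈ 𝒲 | v ∈ W}.ncard + {W ∈ 𝒲 | v ∉ W}.ncard := Set.ncard_union_le _ _
    _ ≤ _ := add_le_add h_with (Set.ncard_le_ncard h_without)

end Branching

theorem ncard_importantDisjointSeparators_le_two_pow [Finite V] (m : ℕ) :
    ∀ (G : SimpleGraph V) (X Y : Set V) (k l : ℕ),
      (∀ U, IsDisjointSeparator G X Y U → l ≤ U.ncard) → 2 * k ≤ m + l →
      {W | IsImportantDisjointSeparator G X Y W ∧ W.ncard ≤ k}.ncard ≤ 2 ^ m := by
  induction m with
  | zero =>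
    intro G X Y k l hl hk
    refine (Set.ncard_le_ncard (t := {∅}) ?_).trans (Set.ncard_singleton _).le
    rintro W ⟨hW, hWk⟩
    have := hl W hW.1
    exact (Set.ncard_eq_zero).1 (by omega)
  | succ m ih =>
    intro G X Y k l hl hk
    by_cases h_ex : ∃ U, IsDisjointSeparator G X Y U
    swap
    · exact (Set.ncard_le_ncard (t := ∅) fun W hW => h_ex ⟨W, hW.1.1⟩).trans (by simp)
    obtain ⟨W₀, hW₀⟩ := exists_isFurthestMinSeparator h_ex
    obtain rfl | ⟨v, hv⟩ := W₀.eq_empty_or_nonempty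
    · refine (Set.ncard_le_ncard (t := {∅}) ?_).trans
        ((Set.ncard_singleton _).le.trans Nat.one_le_two_pow)
      rintro W ⟨hW, -⟩
      exact (hW.2.1 ∅ (Set.empty_subset _) hW₀.isDisjointSeparator).symm
    have hl₀ := hl W₀ hW₀.isDisjointSeparator
    have h_pos : 0 < W₀.ncard := (Set.ncard_pos).2 ⟨v, hv⟩
    have h_delete : ∀ U, IsDisjointSeparator (G.deleteIncidenceSet v) X Y U →
        W₀.ncard - 1 ≤ U.ncard := fun U hU => by
      have := hW₀.ncard_le _ ((isDisjointSeparator_deleteIncidenceSet_iff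
        (hW₀.isDisjointSeparator.1.notMem_of_mem_left hv)).1 hU)
      have := Set.ncard_insert_le v U
      omega
    calc _ ≤ _ := hW₀.ncard_importantDisjointSeparators_le_add hv k
      _ ≤ 2 ^ m + 2 ^ m := add_le_add (ih _ X Y (k - 1) _ h_delete (by omega))
          (ih G _ Y k (W₀.ncard + 1) (fun U hU => hW₀.ncard_lt hv hU) (by omega))
      _ = 2 ^ (m + 1) := by ring

theorem ncard_importantDisjointSeparators_le [Finite V] (G : SimpleGraph V) (X Y : Set V)
    (k : ℕ) : {W | IsImportantDisjointSeparator G X Y W ∧ W.ncard ≤ k}.ncard ≤ 4 ^ k := by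
  have := ncard_importantDisjointSeparators_le_two_pow (2 * k) G X Y k 0
    (fun _ _ => Nat.zero_le _) le_self_add
  rwa [pow_mul] at this

def SimpleGraph.addApex (G : SimpleGraph V) (S : Set V) : SimpleGraph (Option V) where
  Adj
    | some a, some b => G.Adj a b
    | none, some b => b ∈ S
    | some a, none => a ∈ S
    | none, none => False
  symm := by
    constructor
    rintro (_ | a) (_ | b) h
    exacts [h, h, h, h.symm]
  loopless := by
    constructor
    rintro (_ | a) h
    exacts [h, G.loopless.irrefl a h]

section Apex

variable {G : SimpleGraph V} {S T W : Set V}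

lemma reachSet_addApex :
    reachSet (G.addApex S) (some '' W) {none} = insert none (some '' reachSet G W S) := by
  have h_none : none ∈ reachSet (G.addApex S) (some '' W) {none} :=
    diff_subset_reachSet ⟨rfl, by simp⟩
  refine (reachSet_subset_of_closed (by simp) ?_).antisymm
    (Set.insert_subset h_none (Set.image_subset_iff.2 (reachSet_subset_of_closed ?_ ?_)))
  · rintro (_ | a) ha (_ | b) hab hb
    · exact hab.elim
    · exact Or.inr ⟨b, diff_subset_reachSet ⟨hab, by simpa using hb⟩, rfl⟩
    · exact Or.inl rfl
    · obtain h | ⟨a', ha', h⟩ := ha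
      · cases h
      · cases h
        exact Or.inr ⟨b, reachSet_closed ha' hab (by simpa using hb), rfl⟩
  · exact fun x ⟨hx, hxW⟩ => reachSet_closed (G := G.addApex S) h_none hx (by simpa using hxW)
  · exact fun a ha b hab hb => reachSet_closed (G := G.addApex S) ha hab (by simpa using hb)

lemma exists_image_some_eq_of_disjoint {W' : Set (Option V)} (h : Disjoint W' {none}) :
    ∃ W, some '' W = W' :=
  ⟨_, Set.image_preimage_eq_of_subset fun _ hw =>
    Option.ne_none_iff_exists.1 fun h_eq => h.notMem_of_mem_left hw h_eq⟩

lemma isDisjointSeparator_addApex_iff :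
    IsDisjointSeparator (G.addApex S) {none} (some '' T) (some '' W) ↔ IsSeparator G S T W := by
  simp [IsDisjointSeparator, reachSet_addApex, isSeparator_iff_disjoint_reachSet,
    Set.disjoint_image_iff (Option.some_injective V)]

lemma insert_none_image_some_ssubset_iff {A B : Set V} :
    insert none (some '' A) ⊂ insert none (some '' B) ↔ A ⊂ B := by
  simp [Set.ssubset_def, Set.image_subset_image_iff (Option.some_injective V)]

lemma IsImportantSeparator.addApex (hW : IsImportantSeparator G S T W) :
    IsImportantDisjointSeparator (G.addApex S) {none} (some '' T) (some '' W) := by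
  refine ⟨isDisjointSeparator_addApex_iff.2 hW.1, fun U' hU'W hU' => ?_,
    fun U' hU' hU'_card h_ss => ?_⟩ <;>
    obtain ⟨U, rfl⟩ := exists_image_some_eq_of_disjoint hU'.1 <;>
    rw [isDisjointSeparator_addApex_iff] at hU'
  · rw [hW.2.1 U ((Set.image_subset_image_iff (Option.some_injective V)).1 hU'W) hU']
  · rw [Set.ncard_image_of_injective _ (Option.some_injective V),
      Set.ncard_image_of_injective _ (Option.some_injective V)] at hU'_card
    rw [reachSet_addApex, reachSet_addApex, insert_none_image_some_ssubset_iff] at h_ss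
    exact hW.2.2 U hU' hU'_card h_ss

end Apex

theorem important_separators_card_le_general {V : Type*} [Fintype V]
    (G : SimpleGraph V) (S T : Set V) (k : ℕ) :
    {W : Set V | IsImportantSeparator G S T W ∧ W.ncard ≤ k}.ncard
      ≤ 4 ^ k := by
  calc _ ≤ {W | IsImportantDisjointSeparator (G.addApex S) {none} (some '' T) W ∧
        W.ncard ≤ k}.ncard :=
        Set.ncard_le_ncard_of_injOn (Set.image some)
          (fun W hW => ⟨hW.1.addApex,
            by rw [Set.ncard_image_of_injective _ (Option.some_injective V)]; exact hW.2⟩)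
          (Set.image_injective.2 (Option.some_injective V)).injOn
    _ ≤ 4 ^ k := ncard_importantDisjointSeparators_le _ _ _ k

/-- there are at most `4^k` important `S–T` separators of size
at most `k` (Lemma 2.3). -/
theorem important_separators_card_le {V : Type*} [Fintype V] [DecidableEq V]
    (G : SimpleGraph V) (S T : Set V) (k : ℕ) :
    {W : Set V | IsImportantSeparator G S T W ∧ W.ncard ≤ k}.ncard
      ≤ 4 ^ k :=
  important_separators_card_le_general G S T k
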